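/- arXiv:1910.11784 — 2 statements merged into one kernel-verified Lean document; each statement's English description precedes it below -/
import Mathlib

section
/- Let R be a commutative ring with 0 ≠ 1 and let P and Q be rook matrices of size l × k over R, both in pseudo-echelon form. If P and Q have the same zero rows and the same zero columns (for every i, row i of P is zero iff row i of Q is zero, and for every j, column j of P is zero iff column j of Q is zero), then P = Q. In other words, a rook matrix in pseudo-echelon form is completely determined by its zero rows and zero columns. -/
/-- A rook matrix: every entry is 0 or 1, and there is at most one entry
equal to 1 in each row and in each column. -/
def IsRookMatrix {l k : ℕ} {R : Type*} [CommRing R]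
    (A : Matrix (Fin l) (Fin k) R) : Prop :=
  (∀ i j, A i j = 0 ∨ A i j = 1) ∧
  (∀ i j j', A i j = 1 → A i j' = 1 → j = j') ∧
  (∀ i i' j, A i j = 1 → A i' j = 1 → i = i')

/-- Pseudo-echelon form: if rows `i < i'` contain nonzero entries in columns
`j` and `j'` respectively, then `j < j'`. -/
def IsPseudoEchelon {l k : ℕ} {R : Type*} [CommRing R]
    (A : Matrix (Fin l) (Fin k) R) : Prop :=
  ∀ i i' j j', i < i' → A i j ≠ 0 → A i' j' ≠ 0 → j < j'

/-- A permutation matrix: the 0–1 matrix of some permutation `σ`, with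
entry 1 exactly in the positions `(σ j, j)`. -/
def IsPermMatrix {n : ℕ} {R : Type*} [CommRing R]
    (S : Matrix (Fin n) (Fin n) R) : Prop :=
  ∃ σ : Equiv.Perm (Fin n), ∀ i j, S i j = if i = σ j then 1 else 0

/-- The matrix `[f]` associated to a partial equivalence (rook diagram)
`f : PEquiv (Fin k) (Fin l)`: the `(q, p)` entry is 1 if `f p = q` and 0
otherwise. -/
def rookMatrixOf {k l : ℕ} (R : Type*) [CommRing R]
    (f : PEquiv (Fin k) (Fin l)) : Matrix (Fin l) (Fin k) R :=
  fun q p => if f p = some q then 1 else 0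

/-- A partial equivalence (rook diagram) is monotone (planar) if for all
`p, q` in its domain, `p < q` implies `f p < f q`. -/
def IsMonotonePE {k l : ℕ} (f : PEquiv (Fin k) (Fin l)) : Prop :=
  ∀ p q i j, i ∈ f p → j ∈ f q → p < q → i < j

/-! A nonzero entry `A i j` of a pseudo-echelon matrix with at most one nonzero entry per row
is a pivot: `i ↦ j` is a strictly monotone bijection from the nonzero rows onto the nonzero
columns. A strictly monotone map out of a well-order is determined by its range, so the
positions of the nonzero entries are determined by the nonzero rows and columns; for 0–1
matrices this determines the matrix. -/

namespace Matrix

variable {l k : ℕ} {R : Type*} [CommRing R]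

/-- Indexed by a set `S` of nonzero rows rather than by the nonzero rows of `A` themselves, so that
two matrices with the same nonzero rows give maps with the same domain. -/
noncomputable def pivotCol (A : Matrix (Fin l) (Fin k) R) {S : Set (Fin l)}
    (hS : ∀ i ∈ S, ∃ j, A i j ≠ 0) (i : S) : Fin k :=
  (hS i i.2).choose

section pivotCol

variable {A : Matrix (Fin l) (Fin k) R} {S : Set (Fin l)} (hS : ∀ i ∈ S, ∃ j, A i j ≠ 0)

theorem pivotCol_ne_zero (i : S) : A i (A.pivotCol hS i) ≠ 0 :=
  (hS i i.2).choose_spec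

theorem eq_pivotCol_of_ne_zero (hrow : ∀ i j j', A i j ≠ 0 → A i j' ≠ 0 → j = j')
    {i : S} {j : Fin k} (h : A i j ≠ 0) : j = A.pivotCol hS i :=
  hrow i j _ h (pivotCol_ne_zero hS i)

theorem strictMono_pivotCol (hA : IsPseudoEchelon A) : StrictMono (A.pivotCol hS) :=
  fun i i' hii' => hA i i' _ _ hii' (pivotCol_ne_zero hS i) (pivotCol_ne_zero hS i')

theorem ne_zero_iff_exists_pivotCol_eq (hrow : ∀ i j j', A i j ≠ 0 → A i j' ≠ 0 → j = j')
    (hS' : ∀ i, (∃ j, A i j ≠ 0) → i ∈ S) {i : Fin l} {j : Fin k} :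
    A i j ≠ 0 ↔ ∃ hi : i ∈ S, A.pivotCol hS ⟨i, hi⟩ = j := by
  constructor
  · intro h
    have hi := hS' i ⟨j, h⟩
    exact ⟨hi, (eq_pivotCol_of_ne_zero hS hrow (i := ⟨i, hi⟩) h).symm⟩
  · rintro ⟨hi, rfl⟩
    exact pivotCol_ne_zero hS ⟨i, hi⟩

theorem range_pivotCol (hrow : ∀ i j j', A i j ≠ 0 → A i j' ≠ 0 → j = j')
    (hS' : ∀ i, (∃ j, A i j ≠ 0) → i ∈ S) :
    Set.range (A.pivotCol hS) = {j | ∃ i, A i j ≠ 0} := by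
  ext j
  simp only [Set.mem_range, Set.mem_ofPred_eq, ne_zero_iff_exists_pivotCol_eq hS hrow hS',
    Subtype.exists]

end pivotCol

theorem ne_zero_iff_of_isPseudoEchelon {A B : Matrix (Fin l) (Fin k) R}
    (hArow : ∀ i j j', A i j ≠ 0 → A i j' ≠ 0 → j = j')
    (hBrow : ∀ i j j', B i j ≠ 0 → B i j' ≠ 0 → j = j')
    (hA : IsPseudoEchelon A) (hB : IsPseudoEchelon B)
    (hrows : ∀ i, (∃ j, A i j ≠ 0) ↔ (∃ j, B i j ≠ 0))
    (hcols : ∀ j, (∃ i, A i j ≠ 0) ↔ (∃ i, B i j ≠ 0)) (i : Fin l) (j : Fin k) :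
    A i j ≠ 0 ↔ B i j ≠ 0 := by
  set S : Set (Fin l) := {i | ∃ j, A i j ≠ 0}
  have hSA : ∀ i ∈ S, ∃ j, A i j ≠ 0 := fun _ hi => hi
  have hSB : ∀ i ∈ S, ∃ j, B i j ≠ 0 := fun i hi => (hrows i).1 hi
  have hpivot : A.pivotCol hSA = B.pivotCol hSB := by
    rw [← (strictMono_pivotCol hSA hA).range_inj (strictMono_pivotCol hSB hB),
      range_pivotCol hSA hArow (fun _ hi => hi),
      range_pivotCol hSB hBrow (fun i hi => (hrows i).2 hi)]
    exact Set.ext hcols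
  rw [ne_zero_iff_exists_pivotCol_eq hSA hArow (fun _ hi => hi),
    ne_zero_iff_exists_pivotCol_eq hSB hBrow (fun i hi => (hrows i).2 hi), hpivot]

end Matrix

namespace IsRookMatrix

variable {l k : ℕ} {R : Type*} [CommRing R] {A B : Matrix (Fin l) (Fin k) R}

theorem eq_one_of_ne_zero (hA : IsRookMatrix A) {i j} (h : A i j ≠ 0) : A i j = 1 :=
  (hA.1 i j).resolve_left h

theorem eq_of_ne_zero_of_ne_zero (hA : IsRookMatrix A) (i j j') (h : A i j ≠ 0)
    (h' : A i j' ≠ 0) : j = j' :=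
  hA.2.1 i j j' (hA.eq_one_of_ne_zero h) (hA.eq_one_of_ne_zero h')

theorem ext_of_ne_zero_iff (hA : IsRookMatrix A) (hB : IsRookMatrix B)
    (h : ∀ i j, A i j ≠ 0 ↔ B i j ≠ 0) : A = B := by
  ext i j
  by_cases hij : A i j = 0
  · have hBij : B i j = 0 := not_not.1 fun hBij => (h i j).2 hBij hij
    rw [hij, hBij]
  · rw [hA.eq_one_of_ne_zero hij, hB.eq_one_of_ne_zero ((h i j).1 hij)]

end IsRookMatrix

theorem pseudoEchelon_rookMatrix_unique_general {l k : ℕ} {R : Type*} [CommRing R]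
    (P Q : Matrix (Fin l) (Fin k) R)
    (hP : IsRookMatrix P) (hQ : IsRookMatrix Q)
    (hPe : IsPseudoEchelon P) (hQe : IsPseudoEchelon Q)
    (hrows : ∀ i, (∀ j, P i j = 0) ↔ (∀ j, Q i j = 0))
    (hcols : ∀ j, (∀ i, P i j = 0) ↔ (∀ i, Q i j = 0)) :
    P = Q :=
  hP.ext_of_ne_zero_iff hQ <|
    Matrix.ne_zero_iff_of_isPseudoEchelon hP.eq_of_ne_zero_of_ne_zero
      hQ.eq_of_ne_zero_of_ne_zero hPe hQe
      (fun i => by simpa only [not_forall] using not_congr (hrows i))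
      (fun j => by simpa only [not_forall] using not_congr (hcols j))

theorem pseudoEchelon_rookMatrix_unique {l k : ℕ} {R : Type*} [CommRing R]
    [Nontrivial R] (P Q : Matrix (Fin l) (Fin k) R)
    (hP : IsRookMatrix P) (hQ : IsRookMatrix Q)
    (hPe : IsPseudoEchelon P) (hQe : IsPseudoEchelon Q)
    (hrows : ∀ i, (∀ j, P i j = 0) ↔ (∀ j, Q i j = 0))
    (hcols : ∀ j, (∀ i, P i j = 0) ↔ (∀ i, Q i j = 0)) :
    P = Q :=
  pseudoEchelon_rookMatrix_unique_general P Q hP hQ hPe hQe hrows hcols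
end

section
/- Let k, l be natural numbers and let f : PEquiv (Fin k) (Fin l) be a partial equivalence (a rook diagram). Then there exist a permutation σ of Fin k and a monotone partial equivalence p : PEquiv (Fin k) (Fin l) such that f = σ.toPEquiv.trans p. (Diagrammatically: every rook diagram D has a decomposition D = P ∘ S where S is a permutation diagram and P is a planar rook diagram.) -/
theorem IsMonotonePE.of_monotone_key {k l : ℕ} {f : PEquiv (Fin k) (Fin l)} (g : Fin k → ℕ)
    (hg : ∀ x i, i ∈ f x → g x = i) (hmono : Monotone g) : IsMonotonePE f := by
  intro p q i j hi hj hpq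
  have hle : (i : ℕ) ≤ j := hg p i hi ▸ hg q j hj ▸ hmono hpq.le
  exact lt_of_le_of_ne hle fun hij => hpq.ne (f.inj hi (hij ▸ hj))

theorem exists_perm_isMonotonePE_trans {k l : ℕ} (f : PEquiv (Fin k) (Fin l)) :
    ∃ τ : Equiv.Perm (Fin k), IsMonotonePE (τ.toPEquiv.trans f) := by
  let key : Fin k → ℕ := fun x => (f x).elim 0 Fin.val
  refine ⟨Tuple.sort key, IsMonotonePE.of_monotone_key (key ∘ Tuple.sort key) ?_
    (Tuple.monotone_sort key)⟩
  intro x i hi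
  rw [Option.mem_def, PEquiv.trans_eq_some] at hi
  obtain ⟨y, hy, hfy⟩ := hi
  rw [Equiv.toPEquiv_apply, Option.some_inj] at hy
  simp only [Function.comp_apply, key, hy, hfy, Option.elim_some]

theorem Equiv.Perm.inv_toPEquiv_trans_toPEquiv_trans {α β : Type*} (σ : Equiv.Perm α)
    (f : PEquiv α β) : σ⁻¹.toPEquiv.trans (σ.toPEquiv.trans f) = f := by
  rw [← PEquiv.trans_assoc, Equiv.Perm.inv_def, ← Equiv.toPEquiv_trans, Equiv.symm_trans_self,
    Equiv.toPEquiv_refl, PEquiv.refl_trans]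

theorem rook_eq_perm_then_planar {k l : ℕ} (f : PEquiv (Fin k) (Fin l)) :
    ∃ (σ : Equiv.Perm (Fin k)) (p : PEquiv (Fin k) (Fin l)),
      IsMonotonePE p ∧ f = σ.toPEquiv.trans p := by
  obtain ⟨τ, hτ⟩ := exists_perm_isMonotonePE_trans f
  exact ⟨τ⁻¹, τ.toPEquiv.trans f, hτ, (τ.inv_toPEquiv_trans_toPEquiv_trans f).symm⟩
end
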